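/- For the dicyclic group Dic_n (n ≥ 2) of order 4n acting on ℂ² via a ↦ diag(exp(πi/n), exp(−πi/n)) and x ↦ [[0,1],[−1,0]], the sum over nontrivial conjugacy classes (g) of 1/(|C(g)|·(2 − tr(g))), where C(g) is the centralizer of g and tr(g) the trace of its action on ℂ², equals (1/12)(n + 3 − 1/(4n)). -/

import Mathlib

open Complex

/-- The standard 2-dimensional representation of the dicyclic group `Dic n`
(`QuaternionGroup n` in Mathlib), sending `a ↦ diag(exp(πi/n), exp(−πi/n))` and
`x ↦ [[0,1],[−1,0]]`; thus `a^i ↦ diag(e_i, e_i⁻¹)` and `x a^i ↦ [[0, e_i⁻¹],[−e_i, 0]]`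
where `e_i = exp(πi·i/n)`. -/
noncomputable def dicRep (n : ℕ) : QuaternionGroup n → Matrix (Fin 2) (Fin 2) ℂ
  | .a i => !![Complex.exp (Real.pi * Complex.I * i.val / n), 0;
               0, Complex.exp (-(Real.pi * Complex.I * i.val / n))]
  | .xa i => !![0, Complex.exp (-(Real.pi * Complex.I * i.val / n));
                -Complex.exp (Real.pi * Complex.I * i.val / n), 0]

/-!
Since `|C(g)| = |G| / |gᴳ|` and the trace is a class function, the sum over the classes is
`(1 / 4n) ∑_{g ≠ 1} 1 / (2 - tr g)`. The `2n` elements `x aᵐ` have trace `0` and contribute `n`.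
The element `aˡ` has trace `ζˡ + ζ⁻ˡ` for a primitive `2n`-th root of unity `ζ`, and
`∑_{0 < l < m} 1 / ((1 - ζˡ)(1 - ζ⁻ˡ)) = (m² - 1) / 12` for any primitive `m`-th root `ζ`:
the discrete Fourier transform of `k ↦ k` on `{0, …, m - 1}` takes the value `m / (ζˡ - 1)` at
`l ≠ 0`, so the sum is read off from Parseval's identity and `∑ k`, `∑ k²`.
-/

open Finset

theorem ConjClasses.ncard_carrier_mul_card_centralizer {G : Type*} [Group G] [Finite G] (g : G) :
    (ConjClasses.mk g).carrier.ncard * Nat.card (Subgroup.centralizer {g}) = Nat.card G := by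
  rw [Subgroup.nat_card_centralizer_nat_card_stabilizer, ← ConjAct.orbit_eq_carrier_conjClasses,
    ← MulAction.index_stabilizer, Subgroup.index_mul_card]
  rfl

theorem ConjClasses.mk_out {G : Type*} [Monoid G] (c : ConjClasses G) :
    ConjClasses.mk (Quotient.out c) = c :=
  Quotient.out_eq c

theorem ConjClasses.out_mk_one {G : Type*} [Monoid G] : Quotient.out (ConjClasses.mk (1 : G)) = 1 :=
  isConj_one_right.mp (ConjClasses.mk_eq_mk_iff_isConj.mp (ConjClasses.mk_out _).symm)

theorem finsum_conjClasses_div_card_centralizer {G K : Type*} [Group G] [Finite G] [Field K]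
    [CharZero K] (f : G → K) (hf : ∀ g h, IsConj g h → f g = f h) :
    ∑ᶠ c : ConjClasses G, f (Quotient.out c) / Nat.card (Subgroup.centralizer {Quotient.out c}) =
      (∑ᶠ g, f g) / Nat.card G := by
  classical
  cases nonempty_fintype G
  have hclass : ∀ c : ConjClasses G,
      ∑ g with ConjClasses.mk g = c, f g = c.carrier.ncard * f (Quotient.out c) := by
    intro c
    rw [sum_congr rfl fun g hg => hf g _ (ConjClasses.mk_eq_mk_iff_isConj.mp ?_), sum_const,
      nsmul_eq_mul, Set.ncard_eq_toFinset_card']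
    · congr
      ext g
      simp only [mem_filter, mem_univ, true_and, Set.mem_toFinset,
        ConjClasses.mem_carrier_iff_mk_eq]
    · rw [(mem_filter.mp hg).2, ConjClasses.mk_out]
  rw [finsum_eq_sum_of_fintype, finsum_eq_sum_of_fintype, eq_div_iff (by simp), sum_mul,
    ← sum_fiberwise univ ConjClasses.mk f]
  refine sum_congr rfl fun c _ => ?_
  rw [hclass, ← ConjClasses.ncard_carrier_mul_card_centralizer (Quotient.out c), ConjClasses.mk_out]
  push_cast
  field_simp

section RootsOfUnity

variable {R : Type*} [CommRing R]

theorem sum_range_natCast_mul_two (m : ℕ) : (∑ k ∈ range m, (k : R)) * 2 = m * (m - 1) := by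
  induction m with
  | zero => simp
  | succ m ih => rw [sum_range_succ]; push_cast; linear_combination ih

theorem sum_range_natCast_sq_mul_six (m : ℕ) :
    (∑ k ∈ range m, (k : R) ^ 2) * 6 = m * (m - 1) * (2 * m - 1) := by
  induction m with
  | zero => simp
  | succ m ih => rw [sum_range_succ]; push_cast; linear_combination ih

variable {K : Type*} [Field K] {ζ : K} {m : ℕ}

theorem sub_one_mul_sum_range_natCast_mul_pow {z : K} (hz : z ^ m = 1) (hz1 : z ≠ 1) :
    (z - 1) * ∑ k ∈ range m, (k : K) * z ^ k = m := by
  have hgeom : ∑ k ∈ range m, z ^ k = 0 := by rw [geom_sum_eq hz1, hz, sub_self, zero_div]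
  have htelescope := sum_range_sub (fun k => (k : K) * z ^ k) m
  push_cast at htelescope
  calc (z - 1) * ∑ k ∈ range m, (k : K) * z ^ k
      = ∑ k ∈ range m, (((k : K) + 1) * z ^ (k + 1) - k * z ^ k) - z * ∑ k ∈ range m, z ^ k := by
        rw [mul_sum, mul_sum, ← sum_sub_distrib]
        exact sum_congr rfl fun k _ => by ring
    _ = m := by rw [htelescope, hgeom, hz]; ring

theorem natCast_sq_mul_inv_two_sub_add_inv {z : K} (hz : z ^ m = 1) (hz1 : z ≠ 1) :
    (m : K) ^ 2 * (2 - (z + z⁻¹))⁻¹ =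
      (∑ k ∈ range m, (k : K) * z ^ k) * ∑ k ∈ range m, (k : K) * z⁻¹ ^ k := by
  rcases eq_or_ne m 0 with rfl | hm
  · simp
  have hz0 : z ≠ 0 := by rintro rfl; simp [zero_pow hm] at hz
  have hzinv1 : z⁻¹ ≠ 1 := inv_ne_one.mpr hz1
  have e1 := sub_one_mul_sum_range_natCast_mul_pow hz hz1
  have e2 := sub_one_mul_sum_range_natCast_mul_pow (by rw [inv_pow, hz, inv_one]) hzinv1
  have hfactor : 2 - (z + z⁻¹) = (z - 1) * (z⁻¹ - 1) := by field_simp; ring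
  calc (m : K) ^ 2 * (2 - (z + z⁻¹))⁻¹
      = (z - 1) * (∑ k ∈ range m, (k : K) * z ^ k) *
          ((z⁻¹ - 1) * ∑ k ∈ range m, (k : K) * z⁻¹ ^ k) *
          ((z - 1) * (z⁻¹ - 1))⁻¹ := by rw [e1, e2, hfactor, sq]
    _ = _ := by field_simp [sub_ne_zero.mpr hz1, sub_ne_zero.mpr hzinv1]

theorem IsPrimitiveRoot.sum_range_pow_div_pow (hζ : IsPrimitiveRoot ζ m) {j k : ℕ} (hj : j < m)
    (hk : k < m) : ∑ l ∈ range m, (ζ ^ j / ζ ^ k) ^ l = if j = k then (m : K) else 0 := by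
  have hζ0 : ζ ≠ 0 := hζ.ne_zero (by omega)
  split_ifs with hjk
  · simp [hjk, hζ0]
  · have hw : (ζ ^ j / ζ ^ k) ^ m = 1 := by
      rw [div_pow, ← pow_mul, ← pow_mul, mul_comm j, mul_comm k, pow_mul, pow_mul,
        hζ.pow_eq_one, one_pow, one_pow, div_one]
    have hw1 : ζ ^ j / ζ ^ k ≠ 1 := fun h =>
      hjk (hζ.pow_inj hj hk ((div_eq_one_iff_eq (pow_ne_zero _ hζ0)).mp h))
    rw [geom_sum_eq hw1, hw, sub_self, zero_div]

theorem IsPrimitiveRoot.sum_range_sum_mul_pow_mul_sum_mul_inv_pow (hζ : IsPrimitiveRoot ζ m)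
    (a b : ℕ → K) :
    ∑ l ∈ range m, (∑ j ∈ range m, a j * (ζ ^ l) ^ j) * (∑ k ∈ range m, b k * (ζ ^ l)⁻¹ ^ k) =
      m * ∑ j ∈ range m, a j * b j := by
  have hswap : ∀ l j k : ℕ, (ζ ^ l) ^ j * (ζ ^ l)⁻¹ ^ k = (ζ ^ j / ζ ^ k) ^ l := fun l j k => by
    rw [div_pow, inv_pow, ← pow_mul, ← pow_mul, ← pow_mul, ← pow_mul, mul_comm l j, mul_comm l k,
      div_eq_mul_inv]
  calc _ = ∑ j ∈ range m, ∑ k ∈ range m, a j * b k * ∑ l ∈ range m, (ζ ^ j / ζ ^ k) ^ l := by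
        simp_rw [sum_mul_sum, mul_sum]
        rw [sum_comm]
        refine sum_congr rfl fun j _ => ?_
        rw [sum_comm]
        refine sum_congr rfl fun k _ => sum_congr rfl fun l _ => ?_
        rw [← hswap]
        ring
    _ = m * ∑ j ∈ range m, a j * b j := by
        rw [mul_sum]
        refine sum_congr rfl fun j hj => ?_
        rw [sum_congr rfl fun k hk => by
          rw [hζ.sum_range_pow_div_pow (mem_range.1 hj) (mem_range.1 hk)]]
        simp only [mul_ite, mul_zero, sum_ite_eq, hj, ↓reduceIte]
        ring

theorem IsPrimitiveRoot.sum_range_inv_two_sub_pow_add_inv_pow [CharZero K]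
    (hζ : IsPrimitiveRoot ζ m) (hm : m ≠ 0) :
    ∑ l ∈ range m, (2 - (ζ ^ l + (ζ ^ l)⁻¹))⁻¹ = ((m : K) ^ 2 - 1) / 12 := by
  -- At `l = 0` the summand is `0⁻¹ = 0`, while the Fourier coefficient there is `∑ k`.
  have hterm : ∀ l ∈ range m, (m : K) ^ 2 * (2 - (ζ ^ l + (ζ ^ l)⁻¹))⁻¹ =
      (∑ k ∈ range m, (k : K) * (ζ ^ l) ^ k) * (∑ k ∈ range m, (k : K) * (ζ ^ l)⁻¹ ^ k) -
        if l = 0 then (∑ k ∈ range m, (k : K)) * ∑ k ∈ range m, (k : K) else 0 := by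
    intro l hl
    rcases eq_or_ne l 0 with rfl | hl0
    · norm_num
    rw [if_neg hl0, sub_zero]
    exact natCast_sq_mul_inv_two_sub_add_inv
      (by rw [← pow_mul, mul_comm, pow_mul, hζ.pow_eq_one, one_pow])
      (hζ.pow_ne_one_of_pos_of_lt hl0 (mem_range.1 hl))
  have hsum : (m : K) ^ 2 * ∑ l ∈ range m, (2 - (ζ ^ l + (ζ ^ l)⁻¹))⁻¹ =
      m * ∑ k ∈ range m, (k : K) * k - (∑ k ∈ range m, (k : K)) * ∑ k ∈ range m, (k : K) := by
    rw [mul_sum, sum_congr rfl hterm, sum_sub_distrib,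
      hζ.sum_range_sum_mul_pow_mul_sum_mul_inv_pow (fun k => (k : K)) (fun k => k),
      sum_ite_eq' _ _ (fun _ => _), if_pos (mem_range.2 (Nat.pos_of_ne_zero hm))]
  have h1 := sum_range_natCast_mul_two (R := K) m
  have h2 := sum_range_natCast_sq_mul_six (R := K) m
  simp_rw [← sq] at hsum
  apply mul_left_cancel₀ (pow_ne_zero 2 (Nat.cast_ne_zero.mpr hm : (m : K) ≠ 0))
  linear_combination hsum + ((m : K) / 6) * h2 -
    ((∑ k ∈ range m, (k : K)) / 2 + (m : K) * (m - 1) / 4) * h1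

end RootsOfUnity

namespace ZMod

theorem sum_comp_val {N : ℕ} [NeZero N] {M : Type*} [AddCommMonoid M] (f : ℕ → M) :
    ∑ i : ZMod N, f i.val = ∑ l ∈ range N, f l := by
  obtain ⟨k, rfl⟩ := Nat.exists_eq_succ_of_ne_zero (NeZero.ne N)
  exact Fin.sum_univ_eq_sum_range f (k + 1)

theorem stdAddChar_eq_pow {N : ℕ} [NeZero N] (i : ZMod N) :
    stdAddChar i = exp (2 * Real.pi * I / N) ^ i.val := by
  rw [stdAddChar_apply, toCircle_apply, ← exp_nat_mul]
  ring_nf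

variable {n : ℕ} [NeZero n]

theorem stdAddChar_two_mul_eq_exp (i : ZMod (2 * n)) :
    stdAddChar i = exp (Real.pi * I * i.val / n) := by
  rw [stdAddChar_apply, toCircle_apply]
  push_cast
  ring_nf

theorem stdAddChar_two_mul_natCast_self : stdAddChar (n : ZMod (2 * n)) = -1 := by
  have hn : (n : ℂ) ≠ 0 := NeZero.ne _
  rw [stdAddChar_apply, toCircle_natCast]
  push_cast
  rw [show 2 * Real.pi * I * n / (2 * n) = Real.pi * I by field_simp, exp_pi_mul_I]

end ZMod

namespace QuaternionGroup

variable {n : ℕ}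

def equivSum : ZMod (2 * n) ⊕ ZMod (2 * n) ≃ QuaternionGroup n where
  toFun := Sum.elim a xa
  invFun
    | a i => .inl i
    | xa i => .inr i
  left_inv := by rintro (i | i) <;> rfl
  right_inv := by rintro (i | i) <;> rfl

theorem sum_univ [NeZero n] {M : Type*} [AddCommMonoid M] (f : QuaternionGroup n → M) :
    ∑ g, f g = ∑ i, f (a i) + ∑ i, f (xa i) := by
  rw [← equivSum.sum_comp, Fintype.sum_sum_type]
  rfl

end QuaternionGroup

section DicRep

open QuaternionGroup ZMod

variable {n : ℕ} [NeZero n]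

theorem dicRep_a (i : ZMod (2 * n)) :
    dicRep n (a i) = !![stdAddChar i, 0; 0, stdAddChar (-i)] := by
  rw [AddChar.map_neg_eq_inv, stdAddChar_two_mul_eq_exp, ← exp_neg]
  rfl

theorem dicRep_xa (i : ZMod (2 * n)) :
    dicRep n (xa i) = !![0, stdAddChar (-i); -stdAddChar i, 0] := by
  rw [AddChar.map_neg_eq_inv, stdAddChar_two_mul_eq_exp, ← exp_neg]
  rfl

theorem dicRep_mul (g h : QuaternionGroup n) : dicRep n (g * h) = dicRep n g * dicRep n h := by
  rcases g with i | i <;> rcases h with j | j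
  all_goals
    simp only [a_mul_a, a_mul_xa, xa_mul_a, xa_mul_xa, dicRep_a, dicRep_xa, Matrix.mul_fin_two,
      AddChar.map_add_eq_mul, AddChar.map_sub_eq_div, AddChar.map_neg_eq_inv,
      stdAddChar_two_mul_natCast_self, mul_zero, zero_mul, add_zero, zero_add, mul_neg, neg_mul,
      neg_zero]
    congr! 3 <;> field_simp

theorem trace_dicRep_of_isConj {g h : QuaternionGroup n} (hgh : IsConj g h) :
    (dicRep n g).trace = (dicRep n h).trace := by
  obtain ⟨c, rfl⟩ := isConj_iff.mp hgh
  rw [dicRep_mul, dicRep_mul, Matrix.trace_mul_comm, ← dicRep_mul, ← dicRep_mul,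
    inv_mul_cancel_left]

theorem trace_dicRep_a (i : ZMod (2 * n)) :
    (dicRep n (a i)).trace = stdAddChar i + (stdAddChar i)⁻¹ := by
  rw [dicRep_a, Matrix.trace_fin_two_of, AddChar.map_neg_eq_inv]

theorem trace_dicRep_xa (i : ZMod (2 * n)) : (dicRep n (xa i)).trace = 0 := by
  rw [dicRep_xa, Matrix.trace_fin_two_of, add_zero]

theorem trace_dicRep_one : (dicRep n 1).trace = 2 := by
  rw [one_def, trace_dicRep_a, AddChar.map_zero_eq_one, inv_one, one_add_one_eq_two]

theorem sum_inv_two_sub_trace_dicRep :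
    ∑ g : QuaternionGroup n, (2 - (dicRep n g).trace)⁻¹ = (((2 * n : ℕ) : ℂ) ^ 2 - 1) / 12 + n := by
  have hroot := Complex.isPrimitiveRoot_exp (2 * n) (NeZero.ne _)
  rw [sum_univ]
  simp only [trace_dicRep_a, trace_dicRep_xa, stdAddChar_eq_pow]
  rw [ZMod.sum_comp_val (fun l => (2 - (_ ^ l + (_ ^ l)⁻¹))⁻¹),
    hroot.sum_range_inv_two_sub_pow_add_inv_pow (NeZero.ne _), sum_const, card_univ, ZMod.card,
    nsmul_eq_mul, sub_zero]
  push_cast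
  ring

end DicRep

theorem stmt18 (n : ℕ) (hn : 2 ≤ n) :
    ∑ᶠ (c : ConjClasses (QuaternionGroup n)) (_ : c ≠ ConjClasses.mk 1),
      1 / ((Nat.card (Subgroup.centralizer {Quotient.out c} :
              Subgroup (QuaternionGroup n)) : ℂ) *
            (2 - Matrix.trace (dicRep n (Quotient.out c)))) =
      (1 / 12) * ((n : ℂ) + 3 - 1 / (4 * n)) := by
  have : NeZero n := ⟨by omega⟩
  -- The class of `1` may be added to the sum: its term is `1 / (|G| * 0) = 0`.
  calc _ = ∑ᶠ c : ConjClasses (QuaternionGroup n), (2 - (dicRep n (Quotient.out c)).trace)⁻¹ /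
          Nat.card (Subgroup.centralizer {Quotient.out c}) := by
        refine finsum_congr fun c => ?_
        rw [finsum_eq_if, one_div, mul_inv, mul_comm, ← div_eq_mul_inv]
        split_ifs with hc
        · rfl
        · rw [not_not.mp hc, ConjClasses.out_mk_one, trace_dicRep_one, sub_self, inv_zero, zero_div]
    _ = (∑ᶠ g : QuaternionGroup n, (2 - (dicRep n g).trace)⁻¹) / Nat.card (QuaternionGroup n) :=
        finsum_conjClasses_div_card_centralizer (fun g => (2 - (dicRep n g).trace)⁻¹)
          fun _ _ hgh => by rw [trace_dicRep_of_isConj hgh]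
    _ = _ := by
        rw [finsum_eq_sum_of_fintype, sum_inv_two_sub_trace_dicRep, Nat.card_eq_fintype_card,
          QuaternionGroup.card]
        have hn0 : (n : ℂ) ≠ 0 := NeZero.ne _
        push_cast
        field_simp
        ring
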